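/- Suppose \(X\) is a geodesic metric space and \(Y\) is a complete doubling metric measure space supporting a relative isoperimetric inequality with constants \(C_I,\lambda\). Fix \(y_0\in Y\), radii \(0<l<L/2<\mathrm{diam}(Y)/8\), and \(M\ge 2C_1L\), and let \(\mathcal{L}\) be a family of measurable sets \(U\subset Y\) such that each \(U\) contains \(B(y_0,l)\) and is disjoint from some fixed ball \(B\) of radius \(L/2\) with \(B\subset \overline B(y_0,M)\). Then there is \(c>0\) (depending on \(C_I\), \(M\), and the measures of \(B(y_0,l)\) and \(B\)) such that \(P(U,B(y_0,2\lambda M))\ge c\) for every \(U\in\mathcal{L}\); consequently \(\mathrm{Mod}_{q}(\{P(U,\cdot):U\in\mathcal{L}\})<\infty\) for every \(1<q<\infty\), since \(c^{-1}\chi_{B(y_0,2\lambda M)}\) is admissible. -/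

import Mathlib

open MeasureTheory Metric Set ENNReal NNReal Filter Topology

noncomputable section

/-- A rectifiable curve, parametrized by arclength (hence `1`-Lipschitz) on `[0, len]`. -/
structure Curve (X : Type*) [MetricSpace X] where
  len : ℝ
  len_nonneg : 0 ≤ len
  toFun : ℝ → X
  lip : LipschitzOnWith 1 toFun (Set.Icc 0 len)

variable {X : Type*} [MetricSpace X] [MeasurableSpace X]

namespace Curve

/-- The image of a curve. -/
def image (γ : Curve X) : Set X := γ.toFun '' Set.Icc 0 γ.len

/-- A curve is nonconstant if it takes at least two values. -/
def Nonconstant (γ : Curve X) : Prop :=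
  ∃ s ∈ Set.Icc (0:ℝ) γ.len, ∃ t ∈ Set.Icc (0:ℝ) γ.len, γ.toFun s ≠ γ.toFun t

/-- A curve lies in a set `A`. -/
def IsIn (γ : Curve X) (A : Set X) : Prop := γ.image ⊆ A

/-- The line integral `∫_γ ρ ds` (arclength parametrization). -/
def lineIntegral (γ : Curve X) (ρ : X → ℝ≥0∞) : ℝ≥0∞ :=
  ∫⁻ t in Set.Icc (0:ℝ) γ.len, ρ (γ.toFun t)

/-- The arclength measure of a curve, as a Borel measure on `X`. -/
def toMeasure (γ : Curve X) : Measure X :=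
  Measure.map γ.toFun (volume.restrict (Set.Icc 0 γ.len))

/-- A curve joins `E` and `F` if its endpoints lie in `E` and `F` (in either order). -/
def Joins (γ : Curve X) (E F : Set X) : Prop :=
  (γ.toFun 0 ∈ E ∧ γ.toFun γ.len ∈ F) ∨ (γ.toFun 0 ∈ F ∧ γ.toFun γ.len ∈ E)

end Curve

/-- `ρ` is admissible for a family `M` of Borel measures. -/
def Admissible (ρ : X → ℝ≥0∞) (M : Set (Measure X)) : Prop :=
  Measurable ρ ∧ ∀ lam ∈ M, 1 ≤ ∫⁻ x, ρ x ∂lam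

/-- The `p`-modulus of a family of Borel measures. -/
def pMod (p : ℝ) (μ : Measure X) (M : Set (Measure X)) : ℝ≥0∞ :=
  ⨅ (ρ : X → ℝ≥0∞) (_ : Admissible ρ M), ∫⁻ x, ρ x ^ p ∂μ

/-- `ρ` is `p`-weakly admissible for `M`: admissible outside a subfamily of `p`-modulus zero. -/
def WeaklyAdmissible (p : ℝ) (μ : Measure X) (ρ : X → ℝ≥0∞) (M : Set (Measure X)) : Prop :=
  Measurable ρ ∧ ∃ N ⊆ M, pMod p μ N = 0 ∧ ∀ lam ∈ M \ N, 1 ≤ ∫⁻ x, ρ x ∂lam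

/-- The `p`-modulus of a family of (rectifiable) curves. -/
def ModCurve (p : ℝ) (μ : Measure X) (Γ : Set (Curve X)) : ℝ≥0∞ :=
  pMod p μ (Curve.toMeasure '' Γ)

/-- The family `Γ(E,F;Ω)` of curves in `Ω` joining `E ∩ Ω` and `F ∩ Ω`. -/
def curveFamily (E F Ω : Set X) : Set (Curve X) :=
  {γ : Curve X | γ.IsIn Ω ∧ γ.Joins (E ∩ Ω) (F ∩ Ω)}

/-- `g` is an upper gradient of `u` in `Ω`. -/
def IsUpperGradientOn (u : X → ℝ) (g : X → ℝ≥0∞) (Ω : Set X) : Prop :=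
  ∀ γ : Curve X, γ.IsIn Ω → γ.Nonconstant →
    ENNReal.ofReal |u (γ.toFun γ.len) - u (γ.toFun 0)| ≤ γ.lineIntegral g

/-- The Sobolev `p`-capacity `capa_p(A)`, via the Newtonian norm. -/
def sobolevCapacity (p : ℝ) (μ : Measure X) (A : Set X) : ℝ≥0∞ :=
  ⨅ (u : X → ℝ) (_ : ∀ x ∈ A, 1 ≤ u x),
    ((∫⁻ x, ENNReal.ofReal |u x| ^ p ∂μ) ^ (1/p) +
      ⨅ (g : X → ℝ≥0∞) (_ : IsUpperGradientOn u g Set.univ), (∫⁻ x, g x ^ p ∂μ) ^ (1/p))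

/-- The relative (variational) `p`-capacity `cap_p(A, Ω)`:
test functions are `≥ 1` `p`-q.e. on `A` and `≤ 0` outside `Ω`. -/
def relCapacity (p : ℝ) (μ : Measure X) (A Ω : Set X) : ℝ≥0∞ :=
  ⨅ (u : X → ℝ) (_ : sobolevCapacity p μ {x ∈ A | u x < 1} = 0)
    (_ : ∀ x ∉ Ω, u x ≤ 0) (g : X → ℝ≥0∞) (_ : IsUpperGradientOn u g Set.univ),
    ∫⁻ x, g x ^ p ∂μ

/-- `A` is `p`-thin at `x` (Wiener-type integral converges). -/
def PThin (p : ℝ) (μ : Measure X) (A : Set X) (x : X) : Prop :=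
  (∫⁻ t in Set.Ioo (0:ℝ) 1,
    (relCapacity p μ (A ∩ ball x t) (ball x (2*t)) /
      relCapacity p μ (ball x t) (ball x (2*t))) ^ (1/(p-1)) * ENNReal.ofReal t⁻¹) < ⊤

/-- The set `b_p A` of points where `A` is `p`-thick. -/
def thickPts (p : ℝ) (μ : Measure X) (A : Set X) : Set X := {x : X | ¬ PThin p μ A x}

/-- `μ` is doubling with constant `Cd`. -/
def Doubling (μ : Measure X) (Cd : ℝ≥0∞) : Prop :=
  ∀ (x : X) (r : ℝ), 0 < r →
    0 < μ (ball x r) ∧ μ (ball x (2*r)) ≤ Cd * μ (ball x r) ∧ μ (ball x r) < ⊤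

/-- `X` supports a `q`-Poincaré inequality with constants `CP`, `lam`. -/
def PoincareIneq (μ : Measure X) (q CP lam : ℝ) : Prop :=
  ∀ (u : X → ℝ) (g : X → ℝ≥0∞), IsUpperGradientOn u g Set.univ →
    ∀ (x : X) (r : ℝ), 0 < r →
      ∫⁻ y in ball x r, ENNReal.ofReal |u y - ⨍ z in ball x r, u z ∂μ| ∂μ ≤
        ENNReal.ofReal (CP * r) * μ (ball x r) *
          ((∫⁻ y in ball x (lam * r), g y ^ q ∂μ) / μ (ball x (lam * r))) ^ (1/q)

/-- `u` is locally Lipschitz on `W`. -/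
def LocLipOn (u : X → ℝ) (W : Set X) : Prop :=
  ∀ x ∈ W, ∃ r > (0:ℝ), ∃ K : ℝ≥0, LipschitzOnWith K u (ball x r ∩ W)

/-- Convergence in `L¹_loc(W)`. -/
def L1locTendsto (μ : Measure X) (us : ℕ → X → ℝ) (u : X → ℝ) (W : Set X) : Prop :=
  ∀ K : Set X, IsCompact K → K ⊆ W →
    Tendsto (fun n => ∫⁻ x in K, ENNReal.ofReal |us n x - u x| ∂μ) atTop (𝓝 0)

/-- The total variation `‖Du‖(W)` of `u` in an open set `W`, via locally Lipschitz
approximations and their upper gradients. -/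
def variation (μ : Measure X) (u : X → ℝ) (W : Set X) : ℝ≥0∞ :=
  ⨅ (us : ℕ → X → ℝ) (_ : ∀ n, LocLipOn (us n) W) (_ : L1locTendsto μ us u W),
    Filter.liminf
      (fun n => ⨅ (g : X → ℝ≥0∞) (_ : IsUpperGradientOn (us n) g W), ∫⁻ x in W, g x ∂μ)
      atTop

/-- `P` assigns to each set `U` its perimeter measure: on open sets it is the
total variation of the characteristic function of `U`. -/
def IsPerimeter (μ : Measure X) (P : Set X → Measure X) : Prop :=
  ∀ (U W : Set X), IsOpen W → P U W = variation μ (Set.indicator U (fun _ => (1:ℝ))) W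

/-- The family `𝓛(E,F;Ω)` of measures `P(U, Ω ∩ ·)` over measurable `U` with
`b_p E ∩ Ω ⊆ int U` and `b_p F ∩ Ω ⊆ ext U`. -/
def surfaceFamily (p : ℝ) (μ : Measure X) (P : Set X → Measure X) (E F Ω : Set X) :
    Set (Measure X) :=
  {m | ∃ U : Set X, MeasurableSet U ∧ thickPts p μ E ∩ Ω ⊆ interior U ∧
        thickPts p μ F ∩ Ω ⊆ interior Uᶜ ∧ m = (P U).restrict Ω}

/-- The family `𝓛*(E,F;Ω)` of measures `P(U, Ω ∩ ·)` over measurable `U` with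
`E ⊆ int U` and `F ⊆ ext U`. -/
def surfaceFamilyStar (P : Set X → Measure X) (E F Ω : Set X) : Set (Measure X) :=
  {m | ∃ U : Set X, MeasurableSet U ∧ E ⊆ interior U ∧ F ⊆ interior Uᶜ ∧
        m = (P U).restrict Ω}

/-- The noncentered Hardy–Littlewood maximal function. -/
def maximalFn (μ : Measure X) (g : X → ℝ≥0∞) (x : X) : ℝ≥0∞ :=
  ⨆ (z : X) (r : ℝ) (_ : 0 < r) (_ : x ∈ ball z r),
    (∫⁻ y in ball z r, g y ∂μ) / μ (ball z r)

/-- The infimal `p`-energy `inf_g ∫_A g^p dμ` over upper gradients `g` of `u` in `W`. -/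
def ugEnergy (p : ℝ) (μ : Measure X) (u : X → ℝ) (W A : Set X) : ℝ≥0∞ :=
  ⨅ (g : X → ℝ≥0∞) (_ : IsUpperGradientOn u g W), ∫⁻ x in A, g x ^ p ∂μ

/-- `u` is a `p`-superminimizer in `W`. -/
def IsSuperminimizer (p : ℝ) (μ : Measure X) (u : X → ℝ) (W : Set X) : Prop :=
  ∀ φ : X → ℝ, (∃ K : ℝ≥0, LipschitzWith K φ) → HasCompactSupport φ →
    tsupport φ ⊆ W → (∀ x, 0 ≤ φ x) →
    ugEnergy p μ u W {x | φ x ≠ 0} ≤ ugEnergy p μ (fun x => u x + φ x) W {x | φ x ≠ 0}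

/-- `u` is a `p`-subminimizer in `W`. -/
def IsSubminimizer (p : ℝ) (μ : Measure X) (u : X → ℝ) (W : Set X) : Prop :=
  ∀ φ : X → ℝ, (∃ K : ℝ≥0, LipschitzWith K φ) → HasCompactSupport φ →
    tsupport φ ⊆ W → (∀ x, φ x ≤ 0) →
    ugEnergy p μ u W {x | φ x ≠ 0} ≤ ugEnergy p μ (fun x => u x + φ x) W {x | φ x ≠ 0}

/-- The lsc-regularization `u*(x) = lim_{r→0} essinf_{B(x,r)} u`. -/
def lscReg (μ : Measure X) (u : X → ℝ) (x : X) : ℝ :=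
  ⨆ (r : ℝ) (_ : 0 < r), essInf u (μ.restrict (ball x r))

/-- The usc-regularization. -/
def uscReg (μ : Measure X) (u : X → ℝ) (x : X) : ℝ :=
  ⨅ (r : ℝ) (_ : 0 < r), essSup u (μ.restrict (ball x r))

/-- The capacity of the condenser `(E,F;Ω)`. -/
def condCapacity (p : ℝ) (μ : Measure X) (E F Ω : Set X) : ℝ≥0∞ :=
  ⨅ (v : X → ℝ) (_ : ∀ x ∈ Ω, 0 ≤ v x ∧ v x ≤ 1) (_ : ∀ x ∈ E ∩ Ω, v x = 1)
    (_ : ∀ x ∈ F ∩ Ω, v x = 0), ugEnergy p μ v Ω Ω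

/-- `L_f(x,r)`. -/
def eLf {Y : Type*} [MetricSpace Y] (f : X → Y) (x : X) (r : ℝ) : ℝ≥0∞ :=
  ⨆ y ∈ closedBall x r, edist (f x) (f y)

/-- `l_f(x,r)`. -/
def elf {Y : Type*} [MetricSpace Y] (f : X → Y) (x : X) (r : ℝ) : ℝ≥0∞ :=
  ⨅ y ∈ (ball x r)ᶜ, edist (f x) (f y)

end

/-! The isoperimetric inequality on `B(y₀, 2M)` is applied to `U ∈ S`: the part of that ball
inside `U` contains `B(y₀, l)` and the part outside contains `B`, so
`P(U, B(y₀, 2λM)) ≥ min(ν B(y₀,l), ν B) / (2 C_I M) =: c`. Every perimeter measure then gives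
mass at least `c` to `B(y₀, 2λM)`, so `c⁻¹ χ_{B(y₀,2λM)}` is admissible, with finite `q`-energy
because balls have finite measure. -/

section

variable {Y : Type*} [MetricSpace Y] [MeasurableSpace Y]

def RelIsoperimetric (ν : Measure Y) (P : Set Y → Measure Y) (CI lam : ℝ) : Prop :=
  ∀ U : Set Y, MeasurableSet U → ∀ (y : Y) (r : ℝ), 0 < r →
    min (ν (ball y r ∩ U)) (ν (ball y r \ U)) ≤ ENNReal.ofReal (CI * r) * P U (ball y (lam * r))

theorem Doubling.measure_ball_pos {ν : Measure Y} {Cd : ℝ≥0∞} (h : Doubling ν Cd) (y : Y)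
    {r : ℝ} (hr : 0 < r) : 0 < ν (ball y r) :=
  (h y r hr).1

theorem Doubling.measure_ball_lt_top {ν : Measure Y} {Cd : ℝ≥0∞} (h : Doubling ν Cd) (y : Y)
    (r : ℝ) : ν (ball y r) < ⊤ := by
  rcases lt_or_ge 0 r with hr | hr
  · exact (h y r hr).2.2
  · simp [ball_eq_empty.mpr hr]

theorem RelIsoperimetric.div_le_perimeter {ν : Measure Y} {P : Set Y → Measure Y} {CI lam : ℝ}
    (hiso : RelIsoperimetric ν P CI lam) {U A B : Set Y} (hU : MeasurableSet U) {y : Y}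
    {r : ℝ} (hr : 0 < r) (hA : A ⊆ ball y r ∩ U) (hB : B ⊆ ball y r \ U) :
    min (ν A) (ν B) / ENNReal.ofReal (CI * r) ≤ P U (ball y (lam * r)) :=
  ENNReal.div_le_of_le_mul' <|
    (min_le_min (measure_mono hA) (measure_mono hB)).trans (hiso U hU y r hr)

end

section

variable {X : Type*} [MeasurableSpace X]

theorem admissible_indicator_inv {M : Set (Measure X)} {E : Set X} (hE : MeasurableSet E)
    {c : ℝ≥0∞} (hc0 : c ≠ 0) (hc : c ≠ ⊤) (hcM : ∀ m ∈ M, c ≤ m E) :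
    Admissible (E.indicator fun _ => c⁻¹) M := by
  refine ⟨measurable_const.indicator hE, fun m hm => ?_⟩
  rw [lintegral_indicator_const hE]
  calc (1 : ℝ≥0∞) = c⁻¹ * c := (ENNReal.inv_mul_cancel hc0 hc).symm
    _ ≤ c⁻¹ * m E := mul_le_mul_right (hcM m hm) _

theorem pMod_lt_top_of_le_measure {q : ℝ} (hq : 0 < q) (μ : Measure X) {M : Set (Measure X)}
    {E : Set X} (hE : MeasurableSet E) (hμE : μ E ≠ ⊤) {c : ℝ≥0∞} (hc0 : c ≠ 0) (hc : c ≠ ⊤)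
    (hcM : ∀ m ∈ M, c ≤ m E) : pMod q μ M < ⊤ := by
  have hpow : (fun x => E.indicator (fun _ => c⁻¹) x ^ q) = E.indicator fun _ => c⁻¹ ^ q := by
    ext x
    by_cases hx : x ∈ E <;> simp [hx, ENNReal.zero_rpow_of_pos hq]
  calc pMod q μ M ≤ ∫⁻ x, E.indicator (fun _ => c⁻¹) x ^ q ∂μ :=
        iInf₂_le (E.indicator fun _ => c⁻¹) (admissible_indicator_inv hE hc0 hc hcM)
    _ = c⁻¹ ^ q * μ E := by rw [hpow, lintegral_indicator_const hE]
    _ < ⊤ := ENNReal.mul_lt_top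
        (ENNReal.rpow_lt_top_of_nonneg hq.le (ENNReal.inv_ne_top.mpr hc0)) hμE.lt_top

end

theorem surface_modulus_finite_general {Y : Type*} [MetricSpace Y] [MeasurableSpace Y] [BorelSpace Y]
    (ν : Measure Y) (Cd : ℝ≥0∞) (hCd : Doubling ν Cd)
    (P : Set Y → Measure Y) (CI lam : ℝ) (hCI : 0 < CI)
    (hiso : ∀ U : Set Y, MeasurableSet U → ∀ (y : Y) (r : ℝ), 0 < r →
      min (ν (ball y r ∩ U)) (ν (ball y r \ U)) ≤
        ENNReal.ofReal (CI * r) * P U (ball y (lam * r)))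
    (y₀ yB : Y) (l L M C₁ : ℝ) (hC₁ : 1 ≤ C₁)
    (hl : 0 < l) (hlL : l < L / 2)
    (hM : 2 * C₁ * L ≤ M)
    (hB : ball yB (L/2) ⊆ closedBall y₀ M)
    (S : Set (Set Y))
    (hS : ∀ U ∈ S, MeasurableSet U ∧ ball y₀ l ⊆ U ∧ U ∩ ball yB (L/2) = ∅) :
    (∃ c : ℝ≥0∞, 0 < c ∧ ∀ U ∈ S, c ≤ P U (ball y₀ (2 * lam * M))) ∧
    ∀ q : ℝ, 1 < q → pMod q ν ((fun U => P U) '' S) < ⊤ := by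
  have hL : 0 < L := by linarith
  have hLM : 2 * L ≤ M := by nlinarith
  have hM0 : 0 < M := by linarith
  set c := min (ν (ball y₀ l)) (ν (ball yB (L / 2))) / ENNReal.ofReal (CI * (2 * M))
  have hc0 : 0 < c := ENNReal.div_pos
    (lt_min (hCd.measure_ball_pos y₀ hl) (hCd.measure_ball_pos yB (by linarith))).ne'
    ENNReal.ofReal_ne_top
  have hc_top : c ≠ ⊤ := ENNReal.div_ne_top
    (min_lt_of_left_lt (hCd.measure_ball_lt_top y₀ l)).ne
    (ENNReal.ofReal_pos.mpr (by positivity)).ne'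
  have perimeter_ge : ∀ U ∈ S, c ≤ P U (ball y₀ (2 * lam * M)) := by
    intro U hU
    obtain ⟨hUm, hlU, hUB⟩ := hS U hU
    rw [show 2 * lam * M = lam * (2 * M) by ring]
    refine RelIsoperimetric.div_le_perimeter hiso hUm (by positivity)
      (subset_inter (ball_subset_ball (by linarith)) hlU) (subset_sdiff.mpr ⟨?_, ?_⟩)
    · exact hB.trans (closedBall_subset_ball (by linarith))
    · exact (disjoint_iff_inter_eq_empty.mpr hUB).symm
  refine ⟨⟨c, hc0, perimeter_ge⟩, fun q hq => ?_⟩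
  exact pMod_lt_top_of_le_measure (by linarith) ν measurableSet_ball
    (hCd.measure_ball_lt_top y₀ _).ne hc0.ne' hc_top
    (by rintro _ ⟨U, hU, rfl⟩; exact perimeter_ge U hU)

/-- Finiteness of the surface modulus: in a complete doubling space `Y` supporting a
relative isoperimetric inequality, if every `U ∈ S` contains `B(y₀,l)` and is disjoint
from a fixed ball `B = B(y_B, L/2) ⊆ closedBall y₀ M`, then the perimeters
`P(U, B(y₀, 2λM))` are uniformly bounded below by some `c > 0`, and consequently the
`q`-modulus of the family of perimeter measures is finite for every `1 < q < ∞`, since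
`c⁻¹ χ_{B(y₀,2λM)}` is admissible. -/
theorem surface_modulus_finite {Y : Type*} [MetricSpace Y] [MeasurableSpace Y] [BorelSpace Y]
    [CompleteSpace Y]
    (ν : Measure Y) (Cd : ℝ≥0∞) (hCd : Doubling ν Cd)
    (P : Set Y → Measure Y) (CI lam : ℝ) (hCI : 0 < CI) (hlam : 1 ≤ lam)
    (hiso : ∀ U : Set Y, MeasurableSet U → ∀ (y : Y) (r : ℝ), 0 < r →
      min (ν (ball y r ∩ U)) (ν (ball y r \ U)) ≤
        ENNReal.ofReal (CI * r) * P U (ball y (lam * r)))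
    (y₀ yB : Y) (l L M C₁ : ℝ) (hC₁ : 1 ≤ C₁)
    (hl : 0 < l) (hlL : l < L / 2) (hLd : L / 2 < Metric.diam (Set.univ : Set Y) / 8)
    (hM : 2 * C₁ * L ≤ M)
    (hB : ball yB (L/2) ⊆ closedBall y₀ M)
    (S : Set (Set Y))
    (hS : ∀ U ∈ S, MeasurableSet U ∧ ball y₀ l ⊆ U ∧ U ∩ ball yB (L/2) = ∅) :
    (∃ c : ℝ≥0∞, 0 < c ∧ ∀ U ∈ S, c ≤ P U (ball y₀ (2 * lam * M))) ∧
    ∀ q : ℝ, 1 < q → pMod q ν ((fun U => P U) '' S) < ⊤ :=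
  surface_modulus_finite_general ν Cd hCd P CI lam hCI hiso y₀ yB l L M C₁ hC₁ hl hlL hM hB S hS
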